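/- If an ADT sort σ contains two incomparable constructor terms t₁[•], t₂[•] with holes • of sort σ, then the sort σ is expanding. -/

import Mathlib

structure ADTSig where
  numSorts : ℕ
  numCtors : ℕ
  ctorArgs : Fin numCtors → List (Fin numSorts)
  ctorRes : Fin numCtors → Fin numSorts

namespace ADTSig

inductive Term (S : ADTSig) : Fin S.numSorts → Type where
  | mk (f : Fin S.numCtors)
      (args : (i : Fin (S.ctorArgs f).length) → Term S ((S.ctorArgs f).get i)) :
      Term S (S.ctorRes f)

def Term.size {S : ADTSig} : {σ : Fin S.numSorts} → Term S σ → ℕ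
  | _, .mk _ args => 1 + ∑ i, (args i).size

def Term.head {S : ADTSig} : {σ : Fin S.numSorts} → Term S σ → Fin S.numCtors
  | _, .mk f _ => f

def WellDefined (S : ADTSig) : Prop := ∀ σ, Nonempty (S.Term σ)

def ExpandingSort (S : ADTSig) (σ : Fin S.numSorts) : Prop :=
  ∀ n : ℕ, ∃ b : ℕ, ∀ b' ≥ b,
    (∀ t : S.Term σ, t.size ≠ b') ∨ n ≤ Nat.card {t : S.Term σ // t.size = b'}

def ExpandingADT (S : ADTSig) : Prop := ∀ σ, ExpandingSort S σ

/-- The size image `𝕊_σ`. -/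
def SizeImage (S : ADTSig) (σ : Fin S.numSorts) : Set ℕ :=
  {b | ∃ t : S.Term σ, t.size = b}

/-- The relativised size image `𝕊^f_σ`: sizes of terms not starting with `f`. -/
def RelSizeImage (S : ADTSig) (σ : Fin S.numSorts) (f : Fin S.numCtors) : Set ℕ :=
  {b | ∃ t : S.Term σ, t.head ≠ f ∧ t.size = b}

/-- Vertices of the bipartite dependency graph: sorts and constructors. -/
abbrev DepVertex (S : ADTSig) := Sum (Fin S.numSorts) (Fin S.numCtors)

/-- Edges of the dependency graph `D`: `(σ₀, f)` for every constructor `f`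
with result sort `σ₀`, and `(f, σ_j)` for every argument sort `σ_j` of `f`. -/
def DepEdge (S : ADTSig) : DepVertex S → DepVertex S → Prop
  | .inl σ, .inr f => S.ctorRes f = σ
  | .inr f, .inl σ => σ ∈ S.ctorArgs f
  | .inl _, .inl _ => False
  | .inr _, .inr _ => False

/-- `l` is a (nonempty) path in `D` from `σ` to itself: a closed walk. -/
def IsClosedWalk (S : ADTSig) (σ : Fin S.numSorts) (l : List (DepVertex S)) : Prop :=
  l ≠ [] ∧ List.Chain (DepEdge S) (Sum.inl σ) l ∧ l.getLast? = some (Sum.inl σ)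

/-- The vertex list (after the starting vertex `σ¹ = ss 0`) of the cycle
`σ¹ → f¹ → σ² → f² → ⋯ → fⁿ → σ¹` given by `ss`, `fs`. -/
def cycleList (S : ADTSig) (n : ℕ) (ss : Fin (n + 1) → Fin S.numSorts)
    (fs : Fin (n + 1) → Fin S.numCtors) : List (DepVertex S) :=
  ((List.finRange (n + 1)).map (fun i => [Sum.inr (fs i), Sum.inl (ss (i + 1))])).flatten

/-- Constructor terms with exactly one hole `•` of sort `τ`; `Ctx S τ σ` is a
term of sort `σ` with a hole of sort `τ`. -/
inductive Ctx (S : ADTSig) (τ : Fin S.numSorts) : Fin S.numSorts → Type where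
  | hole : Ctx S τ τ
  | node (f : Fin S.numCtors) (i : Fin (S.ctorArgs f).length)
      (c : Ctx S τ ((S.ctorArgs f).get i))
      (side : (j : Fin (S.ctorArgs f).length) → j ≠ i →
         S.Term ((S.ctorArgs f).get j)) :
      Ctx S τ (S.ctorRes f)

/-- `c.fill t` = `c[t]`, filling the hole of `c` with the term `t`. -/
def Ctx.fill {S : ADTSig} {τ : Fin S.numSorts} :
    {σ : Fin S.numSorts} → Ctx S τ σ → S.Term τ → S.Term σ
  | _, .hole, t => t
  | _, .node f i c side, t =>
      Term.mk f (fun j =>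
        if h : j = i then cast (by rw [h]) (c.fill t) else side j h)

/-- The size `|t[•]|` of a term with hole: the number of constructor
occurrences (the hole does not count). -/
def Ctx.csize {S : ADTSig} {τ : Fin S.numSorts} :
    {σ : Fin S.numSorts} → Ctx S τ σ → ℕ
  | _, .hole => 0
  | _, .node f i c side =>
      1 + c.csize + ∑ j, if h : j = i then 0 else (side j h).size

/-- Composition of terms with holes: `t₁[•] ∘ t₂[•] = t₁[t₂[•]]`. -/
def Ctx.comp {S : ADTSig} {τ ρ : Fin S.numSorts} :
    {σ : Fin S.numSorts} → Ctx S τ σ → Ctx S ρ τ → Ctx S ρ σ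
  | _, .hole, d => d
  | _, .node f i c side, d => .node f i (c.comp d) side

/-- `c^i`: the `i`-fold composition of a term with hole with itself. -/
def Ctx.pow {S : ADTSig} {σ : Fin S.numSorts} (c : Ctx S σ σ) : ℕ → Ctx S σ σ
  | 0 => .hole
  | i + 1 => c.comp (c.pow i)

/-- Two terms with holes are incomparable if all their fillings differ. -/
def Incomparable {S : ADTSig} {τ₁ τ₂ σ : Fin S.numSorts}
    (c₁ : Ctx S τ₁ σ) (c₂ : Ctx S τ₂ σ) : Prop :=
  ∀ (s₁ : S.Term τ₁) (s₂ : S.Term τ₂), c₁.fill s₁ ≠ c₂.fill s₂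

end ADTSig

/-!
Put `c₁ = t₁[t₂[•]]` and `c₂ = t₂[t₁[•]]`: they are again incomparable and have the same
size `d = |t₁[•]| + |t₂[•]| > 0`. Wrapping a term `s` in a word of length `k` over `{c₁, c₂}`
gives `2ᵏ` pairwise distinct terms of size `|s| + k d`. Every large enough size `b` of a term
of sort `σ` is of the form `|s| + k d` with `|s|` the least size in the residue class of `b`
modulo `d`, so `k` grows with `b`.
-/

namespace ADTSig

variable {S : ADTSig}

theorem Term.size_pos {σ : Fin S.numSorts} (t : S.Term σ) : 0 < t.size := by
  cases t
  simp [Term.size]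

theorem Term.size_arg_lt {f : Fin S.numCtors}
    (args : (i : Fin (S.ctorArgs f).length) → S.Term ((S.ctorArgs f).get i))
    (i : Fin (S.ctorArgs f).length) : (args i).size < (Term.mk f args).size := by
  have := Finset.single_le_sum (f := fun j => (args j).size) (fun _ _ => Nat.zero_le _)
    (Finset.mem_univ i)
  simp only [Term.size]
  omega

def Term.decompose (m : ℕ) : {σ : Fin S.numSorts} → (t : S.Term σ) → t.size ≤ m + 1 →
    (f : Fin S.numCtors) × ((i : Fin (S.ctorArgs f).length) →
      {s : S.Term ((S.ctorArgs f).get i) // s.size ≤ m})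
  | _, .mk f args, ht => ⟨f, fun i => ⟨args i, by have := Term.size_arg_lt args i; omega⟩⟩

theorem Term.heq_of_decompose_eq {m : ℕ} {σ σ' : Fin S.numSorts} {t : S.Term σ}
    {t' : S.Term σ'} {ht : t.size ≤ m + 1} {ht' : t'.size ≤ m + 1}
    (h : t.decompose m ht = t'.decompose m ht') : HEq t t' := by
  cases t with | mk f args =>
  cases t' with | mk f' args' =>
  obtain ⟨rfl, hargs⟩ := Sigma.mk.inj_iff.mp h
  have : args = args' := funext fun i => congrArg Subtype.val (congrFun (eq_of_heq hargs) i)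
  rw [this]

theorem Term.finite_size_le (m : ℕ) (σ : Fin S.numSorts) :
    Finite {t : S.Term σ // t.size ≤ m} := by
  induction m generalizing σ with
  | zero =>
    have : IsEmpty {t : S.Term σ // t.size ≤ 0} :=
      ⟨fun t => (Term.size_pos t.1).ne' (Nat.le_zero.mp t.2)⟩
    infer_instance
  | succ m ih =>
    exact Finite.of_injective (fun t : {t : S.Term σ // t.size ≤ m + 1} => t.1.decompose m t.2)
      fun t t' h => Subtype.ext (eq_of_heq (Term.heq_of_decompose_eq h))

theorem Term.finite_size_eq (b : ℕ) (σ : Fin S.numSorts) :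
    Finite {t : S.Term σ // t.size = b} :=
  have := Term.finite_size_le b σ
  Finite.of_injective _ (Subtype.impEmbedding _ _ fun _ => le_of_eq).injective

section Ctx

variable {τ ρ : Fin S.numSorts}

theorem Ctx.fill_injective {σ : Fin S.numSorts} (c : Ctx S τ σ) : Function.Injective c.fill := by
  induction c with
  | hole => exact fun _ _ h => h
  | node f i c side ih =>
    intro s s' h
    simp only [Ctx.fill, Term.mk.injEq] at h
    have hi := congrFun h i
    simp only [cast_eq] at hi
    exact ih hi

theorem Ctx.size_fill {σ : Fin S.numSorts} (c : Ctx S τ σ) (s : S.Term τ) :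
    (c.fill s).size = c.csize + s.size := by
  induction c with
  | hole => simp [Ctx.fill, Ctx.csize]
  | node f i c side ih =>
    have hsplit : ∀ j, (if h : j = i then cast (by rw [h]) (c.fill s) else side j h).size
        = (if j = i then (c.fill s).size else 0) + (if h : j = i then 0 else (side j h).size) := by
      intro j
      by_cases hj : j = i
      · subst hj; simp
      · simp [hj]
    simp only [Ctx.fill, Ctx.csize, Term.size, hsplit, Finset.sum_add_distrib,
      Finset.sum_ite_eq', Finset.mem_univ, if_true, ih]
    ring

theorem Ctx.fill_comp {σ : Fin S.numSorts} (c : Ctx S τ σ) (d : Ctx S ρ τ) (s : S.Term ρ) :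
    (c.comp d).fill s = c.fill (d.fill s) := by
  induction c with
  | hole => rfl
  | node f i c side ih => simp only [Ctx.comp, Ctx.fill, ih]

theorem Ctx.csize_comp {σ : Fin S.numSorts} (c : Ctx S τ σ) (d : Ctx S ρ τ) :
    (c.comp d).csize = c.csize + d.csize := by
  induction c with
  | hole => simp [Ctx.comp, Ctx.csize]
  | node f i c side ih => simp only [Ctx.comp, Ctx.csize, ih]; ring

theorem Ctx.fill_of_csize_eq_zero {c : Ctx S τ τ} (hc : c.csize = 0) (s : S.Term τ) :
    c.fill s = s := by
  cases c with
  | hole => rfl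
  | node => simp [Ctx.csize] at hc

end Ctx

section Incomparable

variable {σ : Fin S.numSorts} {c₁ c₂ : Ctx S σ σ}

theorem Incomparable.comp_swap (h : Incomparable c₁ c₂) :
    Incomparable (c₁.comp c₂) (c₂.comp c₁) := by
  intro s₁ s₂
  rw [Ctx.fill_comp, Ctx.fill_comp]
  exact h _ _

theorem Incomparable.csize_pos_left (h : Incomparable c₁ c₂) (s : S.Term σ) : 0 < c₁.csize :=
  Nat.pos_of_ne_zero fun h0 => h (c₂.fill s) s (Ctx.fill_of_csize_eq_zero h0 _)

def fillWord (c₁ c₂ : Ctx S σ σ) : List Bool → S.Term σ → S.Term σ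
  | [], s => s
  | b :: w, s => (if b then c₁ else c₂).fill (fillWord c₁ c₂ w s)

theorem size_fillWord (hsize : c₂.csize = c₁.csize) (w : List Bool) (s : S.Term σ) :
    (fillWord c₁ c₂ w s).size = s.size + w.length * c₁.csize := by
  induction w with
  | nil => simp [fillWord]
  | cons b w ih => cases b <;> simp [fillWord, Ctx.size_fill, ih, hsize] <;> ring

theorem Incomparable.fillWord_inj (h : Incomparable c₁ c₂) (s : S.Term σ) {w w' : List Bool}
    (hlen : w.length = w'.length) (hw : fillWord c₁ c₂ w s = fillWord c₁ c₂ w' s) : w = w' := by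
  induction w generalizing w' with
  | nil => exact (List.length_eq_zero_iff.mp hlen.symm).symm
  | cons b w ih =>
    obtain _ | ⟨b', w'⟩ := w'
    · simp at hlen
    simp only [List.length_cons, Nat.add_right_cancel_iff] at hlen
    cases b <;> cases b' <;> simp only [fillWord, if_true, if_false, Bool.false_eq_true] at hw
    · rw [ih hlen (c₂.fill_injective hw)]
    · exact absurd hw.symm (h _ _)
    · exact absurd hw (h _ _)
    · rw [ih hlen (c₁.fill_injective hw)]

theorem Incomparable.two_pow_le_card_size_eq (h : Incomparable c₁ c₂)
    (hsize : c₂.csize = c₁.csize) (s : S.Term σ) (k : ℕ) :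
    2 ^ k ≤ Nat.card {t : S.Term σ // t.size = s.size + k * c₁.csize} := by
  have := Term.finite_size_eq (s.size + k * c₁.csize) σ
  let wrap (v : Fin k → Bool) : {t : S.Term σ // t.size = s.size + k * c₁.csize} :=
    ⟨fillWord c₁ c₂ (List.ofFn v) s, by rw [size_fillWord hsize, List.length_ofFn]⟩
  have hwrap : Function.Injective wrap := fun v v' hv =>
    List.ofFn_injective (h.fillWord_inj s (by simp) (congrArg Subtype.val hv))
  simpa using Nat.card_le_card_of_injective wrap hwrap

end Incomparable

end ADTSig

theorem exists_forall_mem_eq_add_mul (A : Set ℕ) {d : ℕ} (hd : 0 < d) (n : ℕ) :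
    ∃ M, ∀ b ∈ A, M ≤ b → ∃ a ∈ A, ∃ k, n ≤ k ∧ b = a + k * d := by
  let least (r : ℕ) : ℕ := sInf {a | a ∈ A ∧ a % d = r}
  refine ⟨(Finset.range d).sup least + n * d, fun b hb hMb => ?_⟩
  have hclass : b ∈ {a | a ∈ A ∧ a % d = b % d} := ⟨hb, rfl⟩
  obtain ⟨ha, hmod⟩ := Nat.sInf_mem ⟨b, hclass⟩
  have hab : least (b % d) ≤ b := Nat.sInf_le hclass
  have haM : least (b % d) ≤ (Finset.range d).sup least :=
    Finset.le_sup (Finset.mem_range.mpr (Nat.mod_lt b hd))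
  obtain ⟨k, hk⟩ := (Nat.modEq_iff_dvd' hab).mp hmod
  refine ⟨least (b % d), ha, k, ?_, by rw [mul_comm]; omega⟩
  exact le_of_mul_le_mul_right (by rw [← mul_comm d k, ← hk]; omega) hd

open ADTSig in
theorem incomparable_implies_expanding_general (S : ADTSig)
    (σ : Fin S.numSorts) (t₁ t₂ : Ctx S σ σ)
    (h : Incomparable t₁ t₂) : ExpandingSort S σ := by
  intro n
  rcases isEmpty_or_nonempty (S.Term σ) with _ | ⟨⟨u⟩⟩
  · exact ⟨0, fun _ _ => Or.inl fun t => isEmptyElim t⟩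
  have hcomp := h.comp_swap
  have hsize : (t₂.comp t₁).csize = (t₁.comp t₂).csize := by
    simp only [Ctx.csize_comp, Nat.add_comm]
  obtain ⟨M, hM⟩ :=
    exists_forall_mem_eq_add_mul (SizeImage S σ) (hcomp.csize_pos_left u) n
  refine ⟨M, fun b hb => or_iff_not_imp_left.mpr fun hnot => ?_⟩
  obtain ⟨t, rfl⟩ := not_forall_not.mp hnot
  obtain ⟨_, ⟨s, rfl⟩, k, hk, hsk⟩ := hM t.size ⟨t, rfl⟩ hb
  calc n ≤ 2 ^ k := hk.trans Nat.lt_two_pow_self.le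
    _ ≤ _ := hsk ▸ hcomp.two_pow_le_card_size_eq hsize s k

open ADTSig in
/-- **Lemma 4.** If an ADT sort `σ` contains two incomparable constructor
terms `t₁[•], t₂[•]` with holes `•` of sort `σ`, then `σ` is expanding. -/
theorem incomparable_implies_expanding (S : ADTSig) (hS : S.WellDefined)
    (σ : Fin S.numSorts) (t₁ t₂ : Ctx S σ σ)
    (h : Incomparable t₁ t₂) : ExpandingSort S σ :=
  incomparable_implies_expanding_general S σ t₁ t₂ h
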